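/- Let R be a ring, let Q be a left rooted quiver, let v be a vertex of Q, and let F be a flat right R-module. Then f_v(F), the value at F of the left adjoint f_v of the evaluation functor at v from rep_Q(R) to right R-modules, is a flat representation. -/

import Mathlib

open CategoryTheory Limits

universe w w' v u

namespace RepModels

variable {C : Type u} [Category.{v} C] [Abelian C]

/-- `Ext¹(A, B) = 0`. -/
def ext1Vanishes [HasExt.{w} C] (A B : C) : Prop :=
  Subsingleton (Abelian.Ext A B 1)

/-- `Extⁱ(A, B) = 0` for all `i ≥ 1`. -/
def extVanishes [HasExt.{w} C] (A B : C) : Prop :=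
  ∀ i : ℕ, 1 ≤ i → Subsingleton (Abelian.Ext A B i)

/-- `(𝒜, ℬ)` is a cotorsion pair: each class is the `Ext¹`-orthogonal of the other. -/
def IsCotorsionPair [HasExt.{w} C] (𝒜 ℬ : Set C) : Prop :=
  (∀ X : C, X ∈ 𝒜 ↔ ∀ Y ∈ ℬ, ext1Vanishes.{w} X Y) ∧
  (∀ Y : C, Y ∈ ℬ ↔ ∀ X ∈ 𝒜, ext1Vanishes.{w} X Y)

/-- `(𝒜, ℬ)` is a complete cotorsion pair: it is a cotorsion pair and every object `M`
fits in short exact sequences `0 → B → A → M → 0` and `0 → M → B' → A' → 0`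
with `A, A' ∈ 𝒜` and `B, B' ∈ ℬ`. -/
def IsCompleteCotorsionPair [HasExt.{w} C] (𝒜 ℬ : Set C) : Prop :=
  IsCotorsionPair.{w} 𝒜 ℬ ∧
  (∀ M : C, ∃ (A B : C) (_ : A ∈ 𝒜) (_ : B ∈ ℬ) (f : B ⟶ A) (g : A ⟶ M) (w : f ≫ g = 0),
    (ShortComplex.mk f g w).ShortExact) ∧
  (∀ M : C, ∃ (A B : C) (_ : A ∈ 𝒜) (_ : B ∈ ℬ) (f : M ⟶ B) (g : B ⟶ A) (w : f ≫ g = 0),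
    (ShortComplex.mk f g w).ShortExact)

/-- A pair of classes `(𝒜, ℬ)` is hereditary if `Extⁱ(A, B) = 0` for all `i ≥ 1`,
`A ∈ 𝒜`, `B ∈ ℬ`. -/
def IsHereditaryPair [HasExt.{w} C] (𝒜 ℬ : Set C) : Prop :=
  ∀ A ∈ 𝒜, ∀ B ∈ ℬ, extVanishes.{w} A B

/-- A class `𝒲` of objects is thick: it is closed under direct summands (retracts) and
whenever two of the three terms of a short exact sequence lie in `𝒲`, so does the third. -/
def IsThickClass (𝒲 : Set C) : Prop :=
  (∀ X Y : C, Y ∈ 𝒲 → (∃ (i : X ⟶ Y) (r : Y ⟶ X), i ≫ r = 𝟙 X) → X ∈ 𝒲) ∧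
  (∀ (S : ShortComplex C), S.ShortExact →
    ((S.X₁ ∈ 𝒲 → S.X₂ ∈ 𝒲 → S.X₃ ∈ 𝒲) ∧
     (S.X₁ ∈ 𝒲 → S.X₃ ∈ 𝒲 → S.X₂ ∈ 𝒲) ∧
     (S.X₂ ∈ 𝒲 → S.X₃ ∈ 𝒲 → S.X₁ ∈ 𝒲)))

/-- `(𝒞, 𝒲, ℱ)` is a Hovey triple: `𝒲` is thick and `(𝒞 ∩ 𝒲, ℱ)` and `(𝒞, 𝒲 ∩ ℱ)`
are complete cotorsion pairs. -/
def IsHoveyTriple [HasExt.{w} C] (𝒞 𝒲 ℱ : Set C) : Prop :=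
  IsThickClass 𝒲 ∧
  IsCompleteCotorsionPair.{w} (𝒞 ∩ 𝒲) ℱ ∧
  IsCompleteCotorsionPair.{w} 𝒞 (𝒲 ∩ ℱ)

/-- A Hovey triple is hereditary if both associated complete cotorsion pairs are hereditary. -/
def IsHereditaryHoveyTriple [HasExt.{w} C] (𝒞 𝒲 ℱ : Set C) : Prop :=
  IsHoveyTriple.{w} 𝒞 𝒲 ℱ ∧
  IsHereditaryPair.{w} (𝒞 ∩ 𝒲) ℱ ∧
  IsHereditaryPair.{w} 𝒞 (𝒲 ∩ ℱ)

/-- A complete cotorsion pair `(𝒞, 𝒲)` is projective if `𝒲` is thick and `𝒞 ∩ 𝒲` is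
the class of projective objects. -/
def IsProjectiveCotorsionPair [HasExt.{w} C] (𝒞 𝒲 : Set C) : Prop :=
  IsCompleteCotorsionPair.{w} 𝒞 𝒲 ∧ IsThickClass 𝒲 ∧
  (𝒞 ∩ 𝒲 = {X : C | Projective X})

/-- A complete cotorsion pair `(𝒲, ℱ)` is injective if `𝒲` is thick and `𝒲 ∩ ℱ` is
the class of injective objects. -/
def IsInjectiveCotorsionPair [HasExt.{w} C] (𝒲 ℱ : Set C) : Prop :=
  IsCompleteCotorsionPair.{w} 𝒲 ℱ ∧ IsThickClass 𝒲 ∧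
  (𝒲 ∩ ℱ = {X : C | Injective X})

section Quivers

variable (Q : Type v) [Quiver.{v} Q]

/-- A quiver is left rooted if it contains no infinite sequence of composable arrows
of the form `⋯ → • → • → •`. -/
def LeftRooted : Prop :=
  ¬ ∃ a : ℕ → Q, ∀ n : ℕ, Nonempty (a (n + 1) ⟶ a n)

/-- A quiver is right rooted if it contains no infinite sequence of composable arrows
of the form `• → • → • → ⋯`. -/
def RightRooted : Prop :=
  ¬ ∃ a : ℕ → Q, ∀ n : ℕ, Nonempty (a n ⟶ a (n + 1))

variable {Q}

/-- The canonical map `φᵢˣ : ⊕_{α : j → i} X(j) ⟶ X(i)` for a representation `X` of the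
quiver `Q` (i.e. a functor from the path category of `Q`) and a vertex `i`. -/
noncomputable def phiMap [HasCoproducts.{v} C] (X : Paths Q ⥤ C) (i : Q) :
    (∐ fun p : Σ j : Q, j ⟶ i => X.obj ((Paths.of Q).obj p.1)) ⟶ X.obj ((Paths.of Q).obj i) :=
  Sigma.desc fun p => X.map p.2.toPath

/-- The canonical map `ψᵢˣ : X(i) ⟶ ∏_{α : i → j} X(j)` for a representation `X` of the
quiver `Q` and a vertex `i`. -/
noncomputable def psiMap [HasProducts.{v} C] (X : Paths Q ⥤ C) (i : Q) :
    X.obj ((Paths.of Q).obj i) ⟶ (∏ᶜ fun p : Σ j : Q, i ⟶ j => X.obj ((Paths.of Q).obj p.1)) :=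
  Pi.lift fun p => X.map p.2.toPath

/-- The class `rep_Q 𝒳` of representations all of whose values lie in the class `𝒳`. -/
def repClass (𝒳 : Set C) : Set (Paths Q ⥤ C) :=
  {X | ∀ i : Q, X.obj ((Paths.of Q).obj i) ∈ 𝒳}

/-- The class `Φ(𝒜)`: representations `X` such that for every vertex `i`, `φᵢˣ` is a
monomorphism, `X(i) ∈ 𝒜` and `coker φᵢˣ ∈ 𝒜`. -/
def PhiClass [HasCoproducts.{v} C] (𝒜 : Set C) : Set (Paths Q ⥤ C) :=
  {X | ∀ i : Q, Mono (phiMap X i) ∧ X.obj ((Paths.of Q).obj i) ∈ 𝒜 ∧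
    cokernel (phiMap X i) ∈ 𝒜}

/-- The class `Ψ(ℬ)`: representations `X` such that for every vertex `i`, `ψᵢˣ` is an
epimorphism, `X(i) ∈ ℬ` and `ker ψᵢˣ ∈ ℬ`. -/
def PsiClass [HasProducts.{v} C] (ℬ : Set C) : Set (Paths Q ⥤ C) :=
  {X | ∀ i : Q, Epi (psiMap X i) ∧ X.obj ((Paths.of Q).obj i) ∈ ℬ ∧
    kernel (psiMap X i) ∈ ℬ}

end Quivers

section TotallyAcyclic

variable (𝒯 : Set C)

/-- `D` is a syzygy (cycle object) of an exact complex of projective objects which remains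
exact after applying `Hom(−, F)` for every `F ∈ 𝒯`. -/
def IsRightTotallyAcyclicSyzygy (D : C) : Prop :=
  ∃ P : CochainComplex C ℤ,
    (∀ n : ℤ, Projective (P.X n)) ∧
    (∀ n : ℤ, P.ExactAt n) ∧
    (∀ F ∈ 𝒯, ∀ n : ℤ, ∀ g : P.X n ⟶ F, P.d (n - 1) n ≫ g = 0 →
      ∃ h : P.X (n + 1) ⟶ F, g = P.d n (n + 1) ≫ h) ∧
    (∃ n : ℤ, Nonempty (D ≅ P.cycles n))

/-- `D` is a syzygy (cycle object) of an exact complex of injective objects which remains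
exact after applying `Hom(F, −)` for every `F ∈ 𝒯`. -/
def IsLeftTotallyAcyclicSyzygy (D : C) : Prop :=
  ∃ I : CochainComplex C ℤ,
    (∀ n : ℤ, Injective (I.X n)) ∧
    (∀ n : ℤ, I.ExactAt n) ∧
    (∀ F ∈ 𝒯, ∀ n : ℤ, ∀ g : F ⟶ I.X n, g ≫ I.d n (n + 1) = 0 →
      ∃ h : F ⟶ I.X (n - 1), g = h ≫ I.d (n - 1) n) ∧
    (∃ n : ℤ, Nonempty (D ≅ I.cycles n))

/-- Gorenstein projective objects: syzygies of exact complexes of projectives that stay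
exact under `Hom(−, P)` for every projective `P`. -/
def IsGorensteinProjective (D : C) : Prop :=
  IsRightTotallyAcyclicSyzygy {P : C | Projective P} D

/-- Gorenstein injective objects: syzygies of exact complexes of injectives that stay
exact under `Hom(I, −)` for every injective `I`. -/
def IsGorensteinInjective (D : C) : Prop :=
  IsLeftTotallyAcyclicSyzygy {I : C | Injective I} D

end TotallyAcyclic

-- `HasExt` instances for module categories and their categories of quiver representations.
noncomputable instance (S : Type u) [Ring S] : HasExt.{u + 1} (ModuleCat.{u} S) := by
  have : HasDerivedCategory.{u + 1} (ModuleCat.{u} S) := HasDerivedCategory.standard _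
  exact hasExt_of_hasDerivedCategory _

noncomputable instance (Q : Type u) [Quiver.{u} Q] (S : Type u) [Ring S] :
    HasExt.{u + 1} (Paths Q ⥤ ModuleCat.{u} S) := by
  have : HasDerivedCategory.{u + 1} (Paths Q ⥤ ModuleCat.{u} S) :=
    HasDerivedCategory.standard _
  exact hasExt_of_hasDerivedCategory _

section Modules

variable {S : Type u} [Ring S]

/-- A finitely presented module. -/
def IsFinitelyPresented (F : ModuleCat.{u} S) : Prop :=
  Module.FinitePresentation S F

/-- An epimorphism of modules is pure if finitely presented modules lift along it
(the standard characterization of purity: equivalently, the inclusion of its kernel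
remains a monomorphism after tensoring with any module on the other side). -/
def IsPureEpi {A B : ModuleCat.{u} S} (g : A ⟶ B) : Prop :=
  Epi g ∧ ∀ F : ModuleCat.{u} S, IsFinitelyPresented F → ∀ h : F ⟶ B, ∃ l : F ⟶ A, l ≫ g = h

/-- A monomorphism of modules is pure if it remains a monomorphism after tensoring with
any module on the other side; equivalently, the projection onto its cokernel is a pure
epimorphism. -/
def IsPureMono {A B : ModuleCat.{u} S} (f : A ⟶ B) : Prop :=
  Mono f ∧ IsPureEpi (cokernel.π f)

/-- A module is flat iff every epimorphism onto it is pure. -/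
def IsFlatModule (M : ModuleCat.{u} S) : Prop :=
  ∀ (N : ModuleCat.{u} S) (g : N ⟶ M), Epi g → IsPureEpi g

/-- A module `M` is fp-injective if `Ext¹(F, M) = 0` for every finitely presented `F`. -/
def IsFpInjectiveModule (M : ModuleCat.{u} S) : Prop :=
  ∀ F : ModuleCat.{u} S, IsFinitelyPresented F → ext1Vanishes.{u + 1} F M

/-- Flat dimension at most `n`, via flat resolutions. -/
def FlatDimLE : ℕ → ModuleCat.{u} S → Prop
  | 0, M => IsFlatModule M
  | n + 1, M => ∃ (F : ModuleCat.{u} S) (g : F ⟶ M),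
      Epi g ∧ IsFlatModule F ∧ FlatDimLE n (kernel g)

/-- Fp-injective dimension at most `n`, via fp-injective coresolutions. -/
def FpInjDimLE : ℕ → ModuleCat.{u} S → Prop
  | 0, M => IsFpInjectiveModule M
  | n + 1, M => ∃ (E : ModuleCat.{u} S) (f : M ⟶ E),
      Mono f ∧ IsFpInjectiveModule E ∧ FpInjDimLE n (cokernel f)

/-- Projective dimension at most `n`. -/
def ProjDimLE : ℕ → ModuleCat.{u} S → Prop
  | 0, M => Projective M
  | n + 1, M => ∃ (P : ModuleCat.{u} S) (g : P ⟶ M),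
      Epi g ∧ Projective P ∧ ProjDimLE n (kernel g)

/-- Injective dimension at most `n`. -/
def InjDimLE : ℕ → ModuleCat.{u} S → Prop
  | 0, M => Injective M
  | n + 1, M => ∃ (E : ModuleCat.{u} S) (f : M ⟶ E),
      Mono f ∧ Injective E ∧ InjDimLE n (cokernel f)

/-- A ring `T` is (left) coherent if every finitely generated (left) ideal of `T` is
finitely presented as a `T`-module.  Right coherence of `R` is coherence of `Rᵐᵒᵖ`. -/
def IsCoherentRing (T : Type u) [Ring T] : Prop :=
  ∀ I : Submodule T T, I.FG → Module.FinitePresentation T I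

/-- A ring `R` is Ding-Chen if it is left and right coherent and `R` has finite
fp-injective dimension both as a left `R`-module and as a right `R`-module. -/
def IsDingChenRing (R : Type u) [Ring R] : Prop :=
  IsCoherentRing R ∧ IsCoherentRing Rᵐᵒᵖ ∧
  (∃ n : ℕ, FpInjDimLE n (ModuleCat.of R R)) ∧
  (∃ n : ℕ, FpInjDimLE n (ModuleCat.of Rᵐᵒᵖ Rᵐᵒᵖ))

/-- A ring `R` is Iwanaga-Gorenstein if it is left and right Noetherian and `R` has finite
injective dimension both as a left `R`-module and as a right `R`-module. -/
def IsIwanagaGorensteinRing (R : Type u) [Ring R] : Prop :=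
  IsNoetherianRing R ∧ IsNoetherianRing Rᵐᵒᵖ ∧
  (∃ n : ℕ, InjDimLE n (ModuleCat.of R R)) ∧
  (∃ n : ℕ, InjDimLE n (ModuleCat.of Rᵐᵒᵖ Rᵐᵒᵖ))

end Modules

section Reps

variable {S : Type u} [Ring S] {P : Type u} [Quiver.{u} P]

/-- A representation of a left rooted quiver is a flat object of the representation
category iff at every vertex `v` the canonical map `φᵥ` is a pure monomorphism and the
value at `v` is a flat module (Enochs–Oyonarte–Torrecillas). -/
def IsFlatRep (X : Paths P ⥤ ModuleCat.{u} S) : Prop :=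
  ∀ v : P, IsPureMono (phiMap X v) ∧ IsFlatModule (X.obj ((Paths.of P).obj v))

/-- A representation of a right rooted quiver over a right coherent ring is an fp-injective
object of the representation category iff at every vertex `v` the canonical map `ψᵥ` is a
pure epimorphism and the value at `v` is an fp-injective module
(Eshraghi–Hafezi–Hosseini–Salarian). -/
def IsFpInjectiveRep (X : Paths P ⥤ ModuleCat.{u} S) : Prop :=
  ∀ v : P, IsPureEpi (psiMap X v) ∧ IsFpInjectiveModule (X.obj ((Paths.of P).obj v))

/-- A Ding projective module: a syzygy of an exact complex of projective modules which
remains exact under `Hom(−, F)` for every flat module `F`. -/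
def IsDingProjectiveModule (D : ModuleCat.{u} S) : Prop :=
  IsRightTotallyAcyclicSyzygy {F : ModuleCat.{u} S | IsFlatModule F} D

/-- A Ding injective module: a syzygy of an exact complex of injective modules which
remains exact under `Hom(F, −)` for every fp-injective module `F`. -/
def IsDingInjectiveModule (D : ModuleCat.{u} S) : Prop :=
  IsLeftTotallyAcyclicSyzygy {F : ModuleCat.{u} S | IsFpInjectiveModule F} D

/-- A Ding projective representation: a syzygy of an exact complex of projective objects
of `rep_Q(R)` which remains exact under `Hom(−, F)` for every flat representation `F`. -/
def IsDingProjectiveRep (D : Paths P ⥤ ModuleCat.{u} S) : Prop :=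
  IsRightTotallyAcyclicSyzygy {F : Paths P ⥤ ModuleCat.{u} S | IsFlatRep F} D

/-- A Ding injective representation: a syzygy of an exact complex of injective objects
of `rep_Q(R)` which remains exact under `Hom(F, −)` for every fp-injective
representation `F`. -/
def IsDingInjectiveRep (D : Paths P ⥤ ModuleCat.{u} S) : Prop :=
  IsLeftTotallyAcyclicSyzygy {F : Paths P ⥤ ModuleCat.{u} S | IsFpInjectiveRep F} D

end Reps

section Statement9Aux

variable {S : Type u} [Ring S]

-- iso invariance
theorem isFlatModule_of_iso {M N : ModuleCat.{u} S} (e : M ≅ N) (hM : IsFlatModule M) :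
    IsFlatModule N := by
  intro N' g hg
  have hg' : Epi (g ≫ e.inv) := epi_comp _ _
  obtain ⟨-, hlift⟩ := hM N' (g ≫ e.inv) hg'
  refine ⟨hg, fun P hP h => ?_⟩
  obtain ⟨l, hl⟩ := hlift P hP (h ≫ e.inv)
  refine ⟨l, ?_⟩
  rw [← cancel_mono e.inv, Category.assoc, hl]

theorem isFlatModule_of_subsingleton (M : ModuleCat.{u} S) [Subsingleton M] :
    IsFlatModule M := by
  intro N g hg
  refine ⟨hg, fun P hP h => ⟨0, ?_⟩⟩
  apply ModuleCat.hom_ext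
  apply LinearMap.ext
  intro x
  exact Subsingleton.elim _ _

/-- The key "pullback along a submodule" lifting lemma. -/
theorem lift_of_range_le {M N P : ModuleCat.{u} S} (M₀ : Submodule S M)
    (hM₀ : IsFlatModule (ModuleCat.of S M₀)) (g : N ⟶ M) (hg : Epi g)
    (hP : IsFinitelyPresented P) (h : P ⟶ M) (hh : LinearMap.range h.hom ≤ M₀) :
    ∃ l : P ⟶ N, l ≫ g = h := by
  set N₀ : Submodule S N := M₀.comap g.hom with hN₀
  have hgsurj : Function.Surjective g := (ModuleCat.epi_iff_surjective g).mp hg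
  let g₀ : ModuleCat.of S N₀ ⟶ ModuleCat.of S M₀ :=
    ModuleCat.ofHom ((g.hom : N →ₗ[S] M).restrict (fun x hx => hx))
  have hg₀ : Epi g₀ := by
    rw [ModuleCat.epi_iff_surjective]
    rintro ⟨m, hm⟩
    obtain ⟨n, hn⟩ := hgsurj m
    exact ⟨⟨n, show g n ∈ M₀ by rw [hn]; exact hm⟩, Subtype.ext hn⟩
  let h₀ : P ⟶ ModuleCat.of S M₀ :=
    ModuleCat.ofHom (LinearMap.codRestrict M₀ h.hom (fun p => hh ⟨p, rfl⟩))
  obtain ⟨l₀, hl₀⟩ := (hM₀ _ g₀ hg₀).2 P hP h₀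
  refine ⟨l₀ ≫ ModuleCat.ofHom N₀.subtype, ?_⟩
  apply ModuleCat.hom_ext
  apply LinearMap.ext
  intro p
  have h1 : (g₀ (l₀ p)).1 = (h₀ p).1 := congrArg Subtype.val (by rw [← hl₀]; rfl)
  exact h1


theorem isFlatModule_prod (M₁ M₂ : ModuleCat.{u} S) (h₁ : IsFlatModule M₁)
    (h₂ : IsFlatModule M₂) : IsFlatModule (ModuleCat.of S (M₁ × M₂)) := by
  intro N g hg
  refine ⟨hg, fun P hP h => ?_⟩
  -- step 1: lift the first component
  let fst : ModuleCat.of S (M₁ × M₂) ⟶ M₁ := ModuleCat.ofHom (LinearMap.fst S M₁ M₂)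
  have hfst : Epi (g ≫ fst) := by
    rw [ModuleCat.epi_iff_surjective]
    intro m₁
    obtain ⟨n, hn⟩ := (ModuleCat.epi_iff_surjective g).mp hg (m₁, 0)
    exact ⟨n, show (LinearMap.fst S ↑M₁ ↑M₂) (g n) = m₁ by rw [hn]; rfl⟩
  obtain ⟨l₁, hl₁⟩ := (h₁ N (g ≫ fst) hfst).2 P hP (h ≫ fst)
  -- step 2: the error lands in {0} × M₂
  let h₂' : P ⟶ ModuleCat.of S (M₁ × M₂) := h - l₁ ≫ g
  have hrange : LinearMap.range h₂'.hom ≤ LinearMap.range (LinearMap.inr S M₁ M₂) := by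
    rintro x ⟨p, rfl⟩
    refine ⟨(h₂' p).2, ?_⟩
    have h3 : (g (l₁ p)).1 = (h p).1 := congrArg (fun t : P ⟶ M₁ => t p) hl₁
    have hfst0 : (h₂' p).1 = 0 := sub_eq_zero_of_eq h3.symm
    exact Prod.ext (by simpa using hfst0.symm) rfl
  have hflat0 : IsFlatModule (ModuleCat.of S (LinearMap.range (LinearMap.inr S M₁ M₂))) :=
    isFlatModule_of_iso
      (LinearEquiv.ofInjective (LinearMap.inr S M₁ M₂)
        (LinearMap.inr_injective (M := M₁) (M₂ := M₂))).toModuleIso h₂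
  obtain ⟨l₂, hl₂⟩ := lift_of_range_le _ hflat0 g hg hP h₂' hrange
  refine ⟨l₁ + l₂, ?_⟩
  rw [Preadditive.add_comp, hl₂]
  simp [h₂']

theorem isFlatModule_finPi (F : ModuleCat.{u} S) (hF : IsFlatModule F) :
    ∀ n : ℕ, IsFlatModule (ModuleCat.of S (Fin n → F))
  | 0 => isFlatModule_of_subsingleton _
  | (n+1) => by
    have e : (Prod (F : Type u) (Fin n → (F : Type u))) ≃ₗ[S] (Fin (n+1) → (F : Type u)) :=
      { toFun := fun y => Fin.cons y.1 y.2
        invFun := fun x => (x 0, fun i => x i.succ)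
        map_add' := by
          intro x y
          funext i
          refine Fin.cases ?_ (fun j => ?_) i <;> simp
        map_smul' := by
          intro c x
          funext i
          refine Fin.cases ?_ (fun j => ?_) i <;> simp
        left_inv := by rintro ⟨a, x⟩; simp
        right_inv := by
          intro x
          exact Fin.cons_self_tail x }
    exact isFlatModule_of_iso e.toModuleIso
      (isFlatModule_prod F (ModuleCat.of S (Fin n → F)) hF (isFlatModule_finPi F hF n))

theorem isFlatModule_fintypePi (F : ModuleCat.{u} S) (hF : IsFlatModule F)
    (κ : Type u) [Fintype κ] : IsFlatModule (ModuleCat.of S (κ → F)) := by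
  have e : (Fin (Fintype.card κ) → (F : Type u)) ≃ₗ[S] (κ → F) :=
    LinearEquiv.piCongrLeft S (fun _ : κ => F) (Fintype.equivFin κ).symm
  exact isFlatModule_of_iso e.toModuleIso (isFlatModule_finPi F hF _)

set_option maxHeartbeats 1000000 in
theorem isFlatModule_directSum (F : ModuleCat.{u} S) (hF : IsFlatModule F)
    (ι : Type u) : IsFlatModule (ModuleCat.of S (DirectSum ι (fun _ => (F : Type u)))) := by
  classical
  intro N g hg
  refine ⟨hg, fun P hP h => ?_⟩
  have : Module.Finite S P := by
    have : Module.FinitePresentation S P := hP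
    infer_instance
  obtain ⟨s, hs⟩ := Module.Finite.fg_top (R := S) (M := P)
  -- the finite set of coordinates hit by the generators
  let s' : Finset ι := s.sup (fun p => (h p).support)
  let ι₀ : DirectSum {i // i ∈ s'} (fun _ => (F : Type u)) →ₗ[S] DirectSum ι (fun _ => (F : Type u)) :=
    DirectSum.toModule S {i // i ∈ s'} _ (fun i => DirectSum.lof S ι (fun _ => (F : Type u)) i.1)
  -- a retraction
  let ρ : DirectSum ι (fun _ => (F : Type u)) →ₗ[S] DirectSum {i // i ∈ s'} (fun _ => (F : Type u)) :=
    (DirectSum.linearEquivFunOnFintype S _ (fun _ : {i // i ∈ s'} => (F : Type u))).symm.toLinearMap ∘ₗ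
      LinearMap.pi (fun i : {i // i ∈ s'} => DirectSum.component S ι (fun _ => (F : Type u)) i.1)
  have hρof : ∀ (i : ι) (hi : i ∈ s') (m : F),
      ρ (DirectSum.lof S ι (fun _ => (F : Type u)) i m) =
        DirectSum.lof S {i // i ∈ s'} (fun _ => (F : Type u)) ⟨i, hi⟩ m := by
    intro i hi m
    have hpi : (fun i' : {i // i ∈ s'} =>
        DirectSum.component S ι (fun _ => (F : Type u)) i'.1
          (DirectSum.lof S ι (fun _ => (F : Type u)) i m)) =
        Pi.single (⟨i, hi⟩ : {i // i ∈ s'}) m := by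
      funext i'
      rw [DirectSum.component.of, Pi.single_apply]
      by_cases hii : i = i'.1
      · subst hii
        rw [dif_pos rfl, if_pos (Subtype.ext rfl).symm]
      · rw [dif_neg hii, if_neg (fun hc => hii (by rw [hc]))]
    show (DirectSum.linearEquivFunOnFintype S _ (fun _ : {i // i ∈ s'} => (F : Type u))).symm
        (fun i' => DirectSum.component S ι (fun _ => (F : Type u)) i'.1
          (DirectSum.lof S ι (fun _ => (F : Type u)) i m)) = _
    rw [hpi, DirectSum.linearEquivFunOnFintype_symm_single]
  have hρι : ρ.comp ι₀ = LinearMap.id := by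
    apply DirectSum.linearMap_ext
    intro j
    apply LinearMap.ext
    intro m
    have : ι₀ (DirectSum.lof S {i // i ∈ s'} (fun _ => (F : Type u)) j m) =
        DirectSum.lof S ι (fun _ => (F : Type u)) j.1 m := by
      exact DirectSum.toModule_lof (R := S) (N := DirectSum ι (fun _ => (F : Type u)))
        (φ := fun i => DirectSum.lof S ι (fun _ => (F : Type u)) i.1) j m
    simp only [LinearMap.comp_apply, LinearMap.id_apply, this, hρof j.1 j.2 m]
  have hinj : Function.Injective ι₀ := by
    intro a b hab
    have := congrArg ρ hab
    rw [show ρ (ι₀ a) = a from congrArg (fun t => t a) hρι,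
      show ρ (ι₀ b) = b from congrArg (fun t => t b) hρι] at this
    exact this
  have hmem : ∀ x : (DirectSum ι (fun _ => (F : Type u))), (∀ j ∈ DFinsupp.support x, j ∈ s') →
      x ∈ LinearMap.range ι₀ := by
    intro x hx
    have hsum : (∑ i ∈ DFinsupp.support x, DirectSum.lof S ι (fun _ => (F : Type u)) i (x i)) = x := by
      simpa [DirectSum.lof_eq_of] using DirectSum.sum_support_of x
    rw [← hsum]
    refine Submodule.sum_mem _ (fun i hi => ?_)
    refine ⟨DirectSum.lof S {i // i ∈ s'} (fun _ => (F : Type u)) ⟨i, hx i hi⟩ (x i), ?_⟩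
    exact DirectSum.toModule_lof S _ _
  have hrange : LinearMap.range h.hom ≤ LinearMap.range ι₀ := by
    rintro x ⟨p, rfl⟩
    have hp : p ∈ Submodule.span S (s : Set P) := by rw [hs]; trivial
    refine Submodule.span_induction ?_ ?_ ?_ ?_ hp
    · intro q hq
      refine hmem _ ?_
      intro j hj
      exact Finset.le_sup (f := fun p => (h p).support) hq hj
    · simpa using (LinearMap.range ι₀).zero_mem
    · intro a b _ _ ha hb
      simpa [map_add] using (LinearMap.range ι₀).add_mem ha hb
    · intro c a _ ha
      simpa [map_smul] using (LinearMap.range ι₀).smul_mem c ha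
  have hflat0 : IsFlatModule (ModuleCat.of S (LinearMap.range ι₀)) :=
    isFlatModule_of_iso (LinearEquiv.ofInjective ι₀ hinj).toModuleIso
      (isFlatModule_of_iso (DirectSum.linearEquivFunOnFintype S _
        (fun _ : {i // i ∈ s'} => (F : Type u))).toModuleIso.symm
        (isFlatModule_fintypePi F hF _))
  exact lift_of_range_le _ hflat0 g hg hP h hrange


variable {Q' : Type u} [Quiver.{u} Q']

/-- The standard left adjoint of evaluation at `v`, on objects. -/
noncomputable def freeRep (v : Q') (F : ModuleCat.{u} S) : Paths Q' ⥤ ModuleCat.{u} S where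
  obj j := ∐ fun _ : ((Paths.of Q').obj v ⟶ j) => F
  map {j k} q := Sigma.desc fun p => Sigma.ι (fun _ : ((Paths.of Q').obj v ⟶ k) => F) (p ≫ q)
  map_id j := by
    apply Limits.Sigma.hom_ext
    intro p
    simp
  map_comp {j k l} q r := by
    apply Limits.Sigma.hom_ext
    intro p
    simp

/-- The standard left adjoint of evaluation at `v`. -/
noncomputable def freeFunctor (v : Q') : ModuleCat.{u} S ⥤ (Paths Q' ⥤ ModuleCat.{u} S) where
  obj F := freeRep v F
  map {F F'} φ :=
    { app := fun j => Limits.Sigma.map fun _ => φ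
      naturality := by
        intro j k q
        apply Limits.Sigma.hom_ext
        intro p
        simp [freeRep] }
  map_id F := by
    ext j : 2
    apply Limits.Sigma.hom_ext
    intro p
    simp [freeRep]
  map_comp {F F' F''} φ ψ := by
    ext j : 2
    apply Limits.Sigma.hom_ext
    intro p
    simp [freeRep]

/-- The adjunction between `freeFunctor v` and evaluation at `v`. -/
noncomputable def freeAdj (v : Q') :
    freeFunctor (S := S) v ⊣ (evaluation (Paths Q') (ModuleCat.{u} S)).obj ((Paths.of Q').obj v) :=
  Adjunction.mkOfHomEquiv
  { homEquiv := fun F Y =>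
      { toFun := fun t =>
          Sigma.ι (fun _ : ((Paths.of Q').obj v ⟶ (Paths.of Q').obj v) => F) (𝟙 ((Paths.of Q').obj v)) ≫
            t.app ((Paths.of Q').obj v)
        invFun := fun u =>
          { app := fun j => Sigma.desc fun p => u ≫ Y.map p
            naturality := by
              intro j k q
              apply Limits.Sigma.hom_ext
              intro p
              simp [freeFunctor, freeRep] }
        left_inv := by
          intro t
          ext j : 2
          apply Limits.Sigma.hom_ext
          intro p
          simp only [evaluation_obj_obj, colimit.ι_desc, Cofan.mk_pt, Cofan.mk_ι_app,
            Category.assoc, ← t.naturality]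
          simp [freeFunctor, freeRep]
          exact (congrArg (fun k => Sigma.ι (fun _ : ((Paths.of Q').obj v ⟶ (Paths.of Q').obj v) => F)
            (𝟙 _) ≫ k) (t.naturality p)).symm.trans (by simp [freeFunctor, freeRep])
        right_inv := by
          intro u
          simp [freeRep] }
    homEquiv_naturality_left_symm := by
      intro F F' Y φ u
      ext j : 2
      apply Limits.Sigma.hom_ext
      intro p
      change Sigma.ι (fun _ => F) p ≫ Sigma.desc (fun p => (φ ≫ u) ≫ Y.map p) =
        Sigma.ι (fun _ => F) p ≫ Limits.Sigma.map (fun _ => φ) ≫ Sigma.desc (fun p => u ≫ Y.map p)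
      simp [freeRep, freeFunctor, Equiv.coe_fn_mk, Equiv.coe_fn_symm_mk]
    homEquiv_naturality_right := by
      intro F Y Y' t s
      simp
      exact (Category.assoc _ _ _).symm }

/-- The retraction of `phiMap (freeRep v F) w` on each path component. -/
noncomputable def freeRet (v : Q') (F : ModuleCat.{u} S) :
    ∀ {w : Q'}, ((Paths.of Q').obj v ⟶ (Paths.of Q').obj w) →
      ((F : ModuleCat.{u} S) ⟶ ∐ fun p : Σ j : Q', j ⟶ w => (freeRep v F).obj ((Paths.of Q').obj p.1))
  | _, Quiver.Path.nil => 0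
  | _, @Quiver.Path.cons _ _ _ j _ q α =>
      Sigma.ι (fun _ : ((Paths.of Q').obj v ⟶ (Paths.of Q').obj j) => F) q ≫
        Sigma.ι (fun p : Σ j : Q', j ⟶ _ => (freeRep v F).obj ((Paths.of Q').obj p.1)) ⟨j, α⟩

theorem freeRet_retraction (v : Q') (F : ModuleCat.{u} S) (w : Q') :
    phiMap (freeRep v F) w ≫
      (Sigma.desc (fun q : ((Paths.of Q').obj v ⟶ (Paths.of Q').obj w) => freeRet v F (w := w) q) :
        (freeRep v F).obj ((Paths.of Q').obj w) ⟶ _) = 𝟙 _ := by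
  apply Limits.Sigma.hom_ext
  rintro ⟨j, α⟩
  apply Limits.Sigma.hom_ext
  intro p
  simp only [phiMap, Category.comp_id, colimit.ι_desc_assoc, Cofan.mk_pt, Cofan.mk_ι_app,
    freeRep, colimit.ι_desc, Sigma.ι_desc_assoc, Sigma.ι_desc]
  have hq : (p ≫ α.toPath : (Paths.of Q').obj v ⟶ (Paths.of Q').obj w) = Quiver.Path.cons p α := by
    show Quiver.Path.comp p (Quiver.Hom.toPath α) = Quiver.Path.cons p α
    simp [Quiver.Hom.toPath]
    rfl
  erw [Sigma.ι_desc_assoc, Sigma.ι_desc_assoc, Sigma.ι_desc]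
  erw [hq]
  rfl

/-- `phiMap` is natural. -/
theorem phiMap_comm {X Y : Paths Q' ⥤ ModuleCat.{u} S} (t : X ⟶ Y) (w : Q') :
    phiMap X w ≫ t.app ((Paths.of Q').obj w) =
      (Limits.Sigma.map fun p : Σ j : Q', j ⟶ w => t.app ((Paths.of Q').obj p.1)) ≫ phiMap Y w := by
  apply Limits.Sigma.hom_ext
  intro p
  simp [phiMap]
  exact t.naturality _

/-- A split monomorphism in `ModuleCat` is a pure monomorphism. -/
theorem isPureMono_of_retraction {A B : ModuleCat.{u} S} (g : A ⟶ B) (r : B ⟶ A)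
    (hr : g ≫ r = 𝟙 A) : IsPureMono g := by
  haveI : IsSplitMono g := ⟨⟨⟨r, hr⟩⟩⟩
  refine ⟨inferInstance, ?_, ?_⟩
  · infer_instance
  · intro P hP h
    have hs : g ≫ (𝟙 B - r ≫ g) = 0 := by
      rw [Preadditive.comp_sub, Category.comp_id, ← Category.assoc, hr, Category.id_comp, sub_self]
    set sct : cokernel g ⟶ B := cokernel.desc g (𝟙 B - r ≫ g) hs with hsct
    have hsc : sct ≫ cokernel.π g = 𝟙 (cokernel g) := by
      rw [← cancel_epi (cokernel.π g)]
      rw [← Category.assoc, cokernel.π_desc, Preadditive.sub_comp, Category.id_comp,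
        Category.assoc, cokernel.condition, comp_zero, sub_zero, Category.comp_id]
    exact ⟨h ≫ sct, by rw [Category.assoc, hsc, Category.comp_id]⟩

end Statement9Aux

/-- Let `R` be a ring, `Q` a left rooted quiver, `v` a vertex of `Q` and
`F` a flat right `R`-module.  Then `f_v(F)`, the value at `F` of the left adjoint `f_v`
of the evaluation functor at `v`, is a flat representation. -/
theorem statement9 {R : Type u} [Ring R]
    {Q : Type u} [Quiver.{u} Q] (hQ : LeftRooted Q) (v : Q)
    (f : ModuleCat.{u} Rᵐᵒᵖ ⥤ (Paths Q ⥤ ModuleCat.{u} Rᵐᵒᵖ))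
    (adj : f ⊣ (evaluation (Paths Q) (ModuleCat.{u} Rᵐᵒᵖ)).obj ((Paths.of Q).obj v))
    (F : ModuleCat.{u} Rᵐᵒᵖ) (hF : IsFlatModule F) :
    IsFlatRep (f.obj F) := by
  classical
  have e : f ≅ freeFunctor v := Adjunction.leftAdjointUniq adj (freeAdj v)
  intro w
  constructor
  · -- purity of phiMap
    have hr := freeRet_retraction v F w
    set eF : f.obj F ≅ freeRep v F := e.app F with heF
    refine isPureMono_of_retraction (phiMap (f.obj F) w)
      (eF.hom.app ((Paths.of Q).obj w) ≫
        (Sigma.desc (fun q : ((Paths.of Q).obj v ⟶ (Paths.of Q).obj w) => freeRet v F (w := w) q) :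
          (freeRep v F).obj ((Paths.of Q).obj w) ⟶ _) ≫
        Limits.Sigma.map fun p : Σ j : Q, j ⟶ w => eF.inv.app ((Paths.of Q).obj p.1)) ?_
    rw [← Category.assoc, phiMap_comm eF.hom w, Category.assoc]
    refine (congrArg (fun k => (Limits.Sigma.map fun p : Σ j : Q, j ⟶ w =>
      eF.hom.app ((Paths.of Q).obj p.1)) ≫ k)
      ((Category.assoc _ _ _).symm.trans ((congrArg (· ≫ _) hr).trans (Category.id_comp _)))).trans ?_
    rw [Limits.Sigma.map_comp_map]
    apply Limits.Sigma.hom_ext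
    intro p
    simp
  · -- flatness of the value
    have h1 : IsFlatModule ((freeRep v F).obj ((Paths.of Q).obj w)) := by
      refine isFlatModule_of_iso (ModuleCat.coprodIsoDirectSum
        (fun _ : ((Paths.of Q).obj v ⟶ (Paths.of Q).obj w) => F)).symm ?_
      exact isFlatModule_directSum F hF _
    exact isFlatModule_of_iso ((e.app F).app ((Paths.of Q).obj w)).symm h1

end RepModels
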